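/- arXiv:1104.3402 — 3 statements merged into one kernel-verified Lean document; each statement's English description precedes it below -/
import Mathlib

section
/- Suppose F_n are probability measures on ℝ and ρ is a Radon measure on E = [-∞,∞] \ {0} such that n·F_n converges vaguely to ρ on E (i.e., ∫ h d(nF_n) → ∫ h dρ for every continuous compactly supported h on E). Then for every bounded continuous function g : ℝ → ℝ that vanishes in a neighborhood of 0, ∫ g(x) n F_n(dx) → ∫ g(x) ρ(dx) as n → ∞. -/
open MeasureTheory Set Filter Topology

/-- A function vanishing on a neighborhood of 0. -/
def VanishesNearZero (g : ℝ → ℝ) : Prop := ∃ δ > (0 : ℝ), ∀ x : ℝ, |x| ≤ δ → g x = 0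

/-- Test functions corresponding to continuous compactly supported functions on
`E = [-∞,∞] \ {0}`: continuous on ℝ, vanishing near 0, with limits at `±∞`. -/
def CcTestOnE (g : ℝ → ℝ) : Prop :=
  Continuous g ∧ VanishesNearZero g ∧
    (∃ L : ℝ, Tendsto g atTop (𝓝 L)) ∧ (∃ L : ℝ, Tendsto g atBot (𝓝 L))

/-!
Split `g = g (1 - ψ_M) + g ψ_M`, where `ψ_M` is a continuous cutoff vanishing on `[-M, M]` and
equal to `1` for `|x| ≥ M + 1`. Both `ψ_M` and `g (1 - ψ_M)` are test functions on `E`, since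
they are constant near `±∞`. Hence the `g (1 - ψ_M)` part converges, while the `g ψ_M` part is
bounded by `C ∫ ψ_M dμ_n`, which converges to `C ∫ ψ_M dρ`; the latter tends to `0` as `M → ∞` by
dominated convergence, because `ρ` is finite away from `0`.
-/

def IsFiniteAwayFromZero (μ : Measure ℝ) : Prop := ∀ t > (0 : ℝ), μ {x | t < |x|} ≠ ⊤

lemma isFiniteAwayFromZero_of_isFiniteMeasure (μ : Measure ℝ) [IsFiniteMeasure μ] :
    IsFiniteAwayFromZero μ :=
  fun _ _ => measure_ne_top _ _

lemma IsFiniteAwayFromZero.smul {μ : Measure ℝ} (hμ : IsFiniteAwayFromZero μ) {c : ENNReal}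
    (hc : c ≠ ⊤) : IsFiniteAwayFromZero (c • μ) :=
  fun t ht => ENNReal.mul_ne_top hc (hμ t ht)

lemma isFiniteAwayFromZero_of_tails {ρ : Measure ℝ} (hρp : ∀ x : ℝ, 0 < x → ρ (Ioi x) ≠ ⊤)
    (hρq : ∀ x : ℝ, 0 < x → ρ (Iio (-x)) ≠ ⊤) : IsFiniteAwayFromZero ρ := by
  intro t ht
  have hsub : {x : ℝ | t < |x|} ⊆ Ioi t ∪ Iio (-t) := by
    intro x (hx : t < |x|)
    rcases lt_abs.1 hx with h | h
    · exact Or.inl h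
    · exact Or.inr (by simp only [mem_Iio]; linarith)
  exact measure_ne_top_of_subset hsub
    (ne_top_of_le_ne_top (ENNReal.add_ne_top.2 ⟨hρp t ht, hρq t ht⟩) (measure_union_le _ _))

lemma IsFiniteAwayFromZero.integrable {μ : Measure ℝ} (hμ : IsFiniteAwayFromZero μ)
    {f : ℝ → ℝ} (hf : Continuous f) {C : ℝ} (hC : ∀ x, |f x| ≤ C) (hf0 : VanishesNearZero f) :
    Integrable f μ := by
  obtain ⟨δ, hδ, hfδ⟩ := hf0
  have hS : MeasurableSet {x : ℝ | δ < |x|} :=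
    measurableSet_lt measurable_const continuous_abs.measurable
  have hfS : {x : ℝ | δ < |x|}.indicator f = f := by
    refine indicator_eq_self.2 fun x hx => ?_
    by_contra hxS
    exact hx (hfδ x (not_lt.1 hxS))
  rw [← hfS, integrable_indicator_iff hS]
  exact Measure.integrableOn_of_bounded (hμ δ hδ) hf.aestronglyMeasurable
    (ae_of_all _ fun x => (Real.norm_eq_abs _).trans_le (hC x))

lemma abs_integral_mul_le_mul_integral {μ : Measure ℝ} {g ψ : ℝ → ℝ} {C : ℝ}
    (hC : ∀ x, |g x| ≤ C) (hψ0 : ∀ x, 0 ≤ ψ x) (hψ : Integrable ψ μ) :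
    |∫ x, g x * ψ x ∂μ| ≤ C * ∫ x, ψ x ∂μ := by
  rw [← integral_const_mul, ← Real.norm_eq_abs]
  refine norm_integral_le_of_norm_le (hψ.const_mul C) (ae_of_all _ fun x => ?_)
  rw [Real.norm_eq_abs, abs_mul, abs_of_nonneg (hψ0 x)]
  exact mul_le_mul_of_nonneg_right (hC x) (hψ0 x)

noncomputable def tailCutoff (M x : ℝ) : ℝ := min 1 (max 0 (|x| - M))

lemma continuous_tailCutoff (M : ℝ) : Continuous (tailCutoff M) := by
  unfold tailCutoff; fun_prop

lemma tailCutoff_nonneg (M x : ℝ) : 0 ≤ tailCutoff M x :=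
  le_min zero_le_one (le_max_left _ _)

lemma tailCutoff_le_one (M x : ℝ) : tailCutoff M x ≤ 1 := min_le_left _ _

lemma abs_tailCutoff_le_one (M x : ℝ) : |tailCutoff M x| ≤ 1 := by
  rw [abs_of_nonneg (tailCutoff_nonneg M x)]; exact tailCutoff_le_one M x

lemma tailCutoff_of_abs_le {M x : ℝ} (hx : |x| ≤ M) : tailCutoff M x = 0 := by
  unfold tailCutoff
  rw [max_eq_left (by linarith), min_eq_right zero_le_one]

lemma tailCutoff_of_le_abs {M x : ℝ} (hx : M + 1 ≤ |x|) : tailCutoff M x = 1 := by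
  unfold tailCutoff
  rw [max_eq_right (by linarith), min_eq_left (by linarith)]

lemma tailCutoff_anti {M M' : ℝ} (h : M ≤ M') (x : ℝ) : tailCutoff M' x ≤ tailCutoff M x := by
  unfold tailCutoff; gcongr

lemma ccTestOnE_of_eq_const {h : ℝ → ℝ} (hc : Continuous h) (h0 : VanishesNearZero h)
    {R c : ℝ} (hR : ∀ x, R ≤ |x| → h x = c) : CcTestOnE h := by
  refine ⟨hc, h0, ⟨c, tendsto_const_nhds.congr' ?_⟩, ⟨c, tendsto_const_nhds.congr' ?_⟩⟩
  · filter_upwards [eventually_ge_atTop R] with x hx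
    exact (hR x (hx.trans (le_abs_self x))).symm
  · filter_upwards [eventually_le_atBot (-R)] with x hx
    exact (hR x ((le_neg_of_le_neg hx).trans (neg_le_abs x))).symm

lemma ccTestOnE_tailCutoff {M : ℝ} (hM : 0 < M) : CcTestOnE (tailCutoff M) :=
  ccTestOnE_of_eq_const (continuous_tailCutoff M) ⟨M, hM, fun _ => tailCutoff_of_abs_le⟩
    (fun _ => tailCutoff_of_le_abs)

lemma ccTestOnE_sub_mul_tailCutoff {g : ℝ → ℝ} (hg : Continuous g) (hg0 : VanishesNearZero g)
    (M : ℝ) : CcTestOnE (fun x => g x - g x * tailCutoff M x) := by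
  obtain ⟨δ, hδ, hgδ⟩ := hg0
  refine ccTestOnE_of_eq_const (R := M + 1) (c := 0) (hg.sub (hg.mul (continuous_tailCutoff M)))
    ⟨δ, hδ, fun x hx => by simp [hgδ x hx]⟩ fun x hx => ?_
  simp [tailCutoff_of_le_abs hx]

lemma IsFiniteAwayFromZero.tendsto_integral_tailCutoff {ρ : Measure ℝ}
    (hρ : IsFiniteAwayFromZero ρ) :
    Tendsto (fun M => ∫ x, tailCutoff M x ∂ρ) atTop (𝓝 0) := by
  have hpointwise : ∀ x, Tendsto (fun M => tailCutoff M x) atTop (𝓝 0) := fun x =>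
    tendsto_const_nhds.congr' <| (eventually_ge_atTop |x|).mono fun _ hM =>
      (tailCutoff_of_abs_le hM).symm
  simpa using tendsto_integral_filter_of_dominated_convergence (tailCutoff 1)
    (Eventually.of_forall fun M => (continuous_tailCutoff M).aestronglyMeasurable)
    ((eventually_ge_atTop 1).mono fun M hM => ae_of_all _ fun x => by
      rw [Real.norm_eq_abs, abs_of_nonneg (tailCutoff_nonneg M x)]
      exact tailCutoff_anti hM x)
    (hρ.integrable (continuous_tailCutoff 1) (abs_tailCutoff_le_one 1)
      ⟨1, one_pos, fun _ => tailCutoff_of_abs_le⟩)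
    (ae_of_all _ hpointwise)

lemma IsFiniteAwayFromZero.abs_integral_sub_integral_sub_mul_tailCutoff_le {μ : Measure ℝ}
    (hμ : IsFiniteAwayFromZero μ) {g : ℝ → ℝ} (hg : Continuous g) {C : ℝ}
    (hC : ∀ x, |g x| ≤ C) (hg0 : VanishesNearZero g) {M : ℝ} (hM : 0 < M) :
    |∫ x, g x ∂μ - ∫ x, g x - g x * tailCutoff M x ∂μ| ≤ C * ∫ x, tailCutoff M x ∂μ := by
  have hgψ : Integrable (fun x => g x * tailCutoff M x) μ := by
    obtain ⟨δ, hδ, hgδ⟩ := hg0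
    refine hμ.integrable (hg.mul (continuous_tailCutoff M)) (C := C) (fun x => ?_)
      ⟨δ, hδ, fun x hx => by simp [hgδ x hx]⟩
    rw [abs_mul]
    exact (mul_le_of_le_one_right (abs_nonneg _) (abs_tailCutoff_le_one M x)).trans (hC x)
  rw [integral_sub (hμ.integrable hg hC hg0) hgψ, sub_sub_cancel]
  exact abs_integral_mul_le_mul_integral hC (tailCutoff_nonneg M)
    (hμ.integrable (continuous_tailCutoff M) (abs_tailCutoff_le_one M)
      ⟨M, hM, fun _ => tailCutoff_of_abs_le⟩)

lemma tendsto_of_eventually_approx {ι κ : Type*} {l : Filter ι} [l.NeBot] {l' : Filter κ}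
    {u : κ → ℝ} {a : ℝ} {v w : ι → κ → ℝ} {b e : ι → ℝ}
    (hv : ∀ᶠ i in l, Tendsto (v i) l' (𝓝 (b i))) (hw : ∀ᶠ i in l, Tendsto (w i) l' (𝓝 (e i)))
    (he : Tendsto e l (𝓝 0)) (huv : ∀ᶠ i in l, ∀ k, |u k - v i k| ≤ w i k)
    (hab : ∀ᶠ i in l, |a - b i| ≤ e i) : Tendsto u l' (𝓝 a) := by
  refine Metric.tendsto_nhds.2 fun ε hε => ?_
  obtain ⟨i, hvi, hwi, hei, huvi, habi⟩ :=
    (hv.and <| hw.and <| (he.eventually (gt_mem_nhds (by positivity : 0 < ε / 3))).and <|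
      huv.and hab).exists
  filter_upwards [Metric.tendsto_nhds.1 hvi (ε / 3) (by positivity),
    hwi.eventually (gt_mem_nhds hei)] with k hvk hwk
  rw [Real.dist_eq] at hvk ⊢
  have hvia := abs_sub_le (v i k) (b i) a
  rw [abs_sub_comm (b i)] at hvia
  linarith [abs_sub_le (u k) (v i k) a, huvi k]

theorem IsFiniteAwayFromZero.tendsto_integral_of_vague {ι : Type*} {l : Filter ι}
    {μ : ι → Measure ℝ} (hμ : ∀ n, IsFiniteAwayFromZero (μ n)) {ρ : Measure ℝ}
    (hρ : IsFiniteAwayFromZero ρ)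
    (hvague : ∀ h : ℝ → ℝ, CcTestOnE h →
      Tendsto (fun n => ∫ x, h x ∂(μ n)) l (𝓝 (∫ x, h x ∂ρ)))
    {g : ℝ → ℝ} (hg : Continuous g) {C : ℝ} (hC : ∀ x, |g x| ≤ C) (hg0 : VanishesNearZero g) :
    Tendsto (fun n => ∫ x, g x ∂(μ n)) l (𝓝 (∫ x, g x ∂ρ)) := by
  have hpos : ∀ᶠ M : ℝ in atTop, 0 < M := eventually_gt_atTop 0
  refine tendsto_of_eventually_approx (l := atTop)
    (v := fun M n => ∫ x, g x - g x * tailCutoff M x ∂(μ n))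
    (w := fun M n => C * ∫ x, tailCutoff M x ∂(μ n))
    (.of_forall fun M => hvague _ (ccTestOnE_sub_mul_tailCutoff hg hg0 M))
    (hpos.mono fun M hM => (hvague _ (ccTestOnE_tailCutoff hM)).const_mul C)
    (by simpa using hρ.tendsto_integral_tailCutoff.const_mul C)
    (hpos.mono fun M hM n =>
      (hμ n).abs_integral_sub_integral_sub_mul_tailCutoff_le hg hC hg0 hM)
    (hpos.mono fun M hM => hρ.abs_integral_sub_integral_sub_mul_tailCutoff_le hg hC hg0 hM)

theorem vague_convergence_extends_to_bounded_vanishing_near_zero_general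
    (F : ℕ → Measure ℝ) (hF : ∀ n, IsProbabilityMeasure (F n))
    (ρ : Measure ℝ) (α p q : ℝ)
    (hρp : ∀ x : ℝ, 0 < x → ρ (Ioi x) = ENNReal.ofReal (p * x ^ (-α)))
    (hρq : ∀ x : ℝ, 0 < x → ρ (Iio (-x)) = ENNReal.ofReal (q * x ^ (-α)))
    (hvague : ∀ h : ℝ → ℝ, CcTestOnE h →
      Tendsto (fun n : ℕ => (n : ℝ) * ∫ x, h x ∂(F n)) atTop (𝓝 (∫ x, h x ∂ρ))) :
    ∀ g : ℝ → ℝ, Continuous g → (∃ C : ℝ, ∀ x, |g x| ≤ C) → VanishesNearZero g →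
      Tendsto (fun n : ℕ => (n : ℝ) * ∫ x, g x ∂(F n)) atTop (𝓝 (∫ x, g x ∂ρ)) := by
  intro g hg ⟨C, hC⟩ hg0
  have hscale : ∀ (n : ℕ) (f : ℝ → ℝ),
      (n : ℝ) * ∫ x, f x ∂(F n) = ∫ x, f x ∂((n : ENNReal) • F n) :=
    fun n f => by simp [integral_smul_measure]
  simp only [hscale] at hvague ⊢
  refine IsFiniteAwayFromZero.tendsto_integral_of_vague
    (fun n => (isFiniteAwayFromZero_of_isFiniteMeasure (F n)).smul (ENNReal.natCast_ne_top n))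
    (isFiniteAwayFromZero_of_tails (fun x hx => ?_) (fun x hx => ?_)) hvague hg hC hg0
  · simp [hρp x hx]
  · simp [hρq x hx]

theorem vague_convergence_extends_to_bounded_vanishing_near_zero
    (F : ℕ → Measure ℝ) (hF : ∀ n, IsProbabilityMeasure (F n))
    (ρ : Measure ℝ) (α p q : ℝ) (hα : 0 < α) (hα2 : α < 2) (hpq : p + q = 1)
    (hρp : ∀ x : ℝ, 0 < x → ρ (Ioi x) = ENNReal.ofReal (p * x ^ (-α)))
    (hρq : ∀ x : ℝ, 0 < x → ρ (Iio (-x)) = ENNReal.ofReal (q * x ^ (-α)))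
    (hvague : ∀ h : ℝ → ℝ, CcTestOnE h →
      Tendsto (fun n : ℕ => (n : ℝ) * ∫ x, h x ∂(F n)) atTop (𝓝 (∫ x, h x ∂ρ))) :
    ∀ g : ℝ → ℝ, Continuous g → (∃ C : ℝ, ∀ x, |g x| ≤ C) → VanishesNearZero g →
      Tendsto (fun n : ℕ => (n : ℝ) * ∫ x, g x ∂(F n)) atTop (𝓝 (∫ x, g x ∂ρ)) :=
  vague_convergence_extends_to_bounded_vanishing_near_zero_general F hF ρ α p q hρp hρq hvague
end

section
/- Let X be a real random variable with E|X| possibly infinite, b_n → ∞. Then E[|X/b_n| · 1_{|X| ≤ b_n}] → 0 as n → ∞. -/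
/-! Bounded convergence: the integrand takes values in `[0, 1]` and is at most `|X| / |b n|`,
which tends to `0` pointwise. -/

open MeasureTheory Filter Topology

noncomputable def truncatedAbsRatio (b x : ℝ) : ℝ :=
  if |x| ≤ b then |x / b| else 0

lemma abs_div_le_one_of_abs_le {x b : ℝ} (h : |x| ≤ b) : |x / b| ≤ 1 := by
  rcases ((abs_nonneg x).trans h).eq_or_lt with hb | hb
  · simp [← hb]
  · rw [abs_div, abs_of_pos hb]
    exact div_le_one_of_le₀ h hb.le

namespace truncatedAbsRatio

lemma nonneg (b x : ℝ) : 0 ≤ truncatedAbsRatio b x := by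
  unfold truncatedAbsRatio
  split_ifs <;> positivity

lemma le_one (b x : ℝ) : truncatedAbsRatio b x ≤ 1 := by
  unfold truncatedAbsRatio
  split_ifs with h
  · exact abs_div_le_one_of_abs_le h
  · exact zero_le_one

lemma le_abs_div_abs (b x : ℝ) : truncatedAbsRatio b x ≤ |x| / |b| := by
  unfold truncatedAbsRatio
  split_ifs
  · exact (abs_div x b).le
  · positivity

lemma measurable (b : ℝ) : Measurable (truncatedAbsRatio b) :=
  Measurable.ite (measurableSet_le measurable_abs measurable_const)
    (measurable_id.div_const b).abs measurable_const

lemma tendsto_zero {α : Type*} {l : Filter α} {b : α → ℝ} (hb : Tendsto b l atTop) (x : ℝ) :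
    Tendsto (fun i => truncatedAbsRatio (b i) x) l (𝓝 0) :=
  squeeze_zero (fun i => nonneg (b i) x) (fun i => le_abs_div_abs (b i) x)
    (tendsto_const_nhds.div_atTop (tendsto_abs_atTop_atTop.comp hb))

end truncatedAbsRatio

theorem truncated_abs_mean_tendsto_zero_general
    {Ω : Type*} [MeasurableSpace Ω] (P : Measure Ω) [IsProbabilityMeasure P]
    (X : Ω → ℝ) (hX : Measurable X)
    (b : ℕ → ℝ) (hbtop : Tendsto b atTop atTop) :
    Tendsto (fun n : ℕ => ∫ ω, (if |X ω| ≤ b n then |X ω / b n| else 0) ∂P)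
      atTop (𝓝 0) := by
  have hbound : ∀ n, ∀ᵐ ω ∂P, ‖truncatedAbsRatio (b n) (X ω)‖ ≤ 1 := fun n =>
    ae_of_all _ fun ω => by
      rw [Real.norm_of_nonneg (truncatedAbsRatio.nonneg _ _)]
      exact truncatedAbsRatio.le_one _ _
  have h := tendsto_integral_of_dominated_convergence (fun _ => (1 : ℝ))
    (fun n => ((truncatedAbsRatio.measurable (b n)).comp hX).aestronglyMeasurable)
    (integrable_const 1) hbound
    (ae_of_all _ fun ω => truncatedAbsRatio.tendsto_zero hbtop (X ω))
  rwa [integral_zero] at h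

theorem truncated_abs_mean_tendsto_zero
    {Ω : Type*} [MeasurableSpace Ω] (P : Measure Ω) [IsProbabilityMeasure P]
    (X : Ω → ℝ) (hX : Measurable X)
    (b : ℕ → ℝ) (hb : ∀ n, 0 < b n) (hbtop : Tendsto b atTop atTop) :
    Tendsto (fun n : ℕ => ∫ ω, (if |X ω| ≤ b n then |X ω / b n| else 0) ∂P)
      atTop (𝓝 0) :=
  truncated_abs_mean_tendsto_zero_general P X hX b hbtop
end

section
/- Suppose n·P(X/b_n ∈ ·) converges vaguely to ρ on E = [-∞,∞] \ {0}, where ρ has continuous tail functions ρ((x,∞]) = p x^{-α}, ρ([-∞,-x)) = q x^{-α}. If c_n → 0 is any real sequence, then n·P(X/b_n − c_n ∈ ·) also converges vaguely to ρ on E. -/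
open MeasureTheory Set Filter Topology

/-!
A test function `h` has limits at `±∞`, hence is uniformly continuous, and it vanishes on
`[-δ, δ]`. So once `|c n| ≤ δ / 2`, the difference `h (y - c n) - h y` is uniformly small and
supported in `|y| ≥ δ / 2`, where it is dominated by `ε * g y` for a nonnegative test function `g`
equal to `1` there. As `n * E g (X / b n)` converges, it is bounded, and therefore
`n * E [h (X / b n - c n) - h (X / b n)] → 0`.
-/

theorem Real.uniformContinuous_of_tendsto_atBot_atTop {f : ℝ → ℝ} (hf : Continuous f)
    {a b : ℝ} (ha : Tendsto f atBot (𝓝 a)) (hb : Tendsto f atTop (𝓝 b)) :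
    UniformContinuous f := by
  -- subtracting a ramp from `a` to `b` leaves a function vanishing at infinity
  set r : ℝ → ℝ := fun x => a + (b - a) * projIcc (0 : ℝ) 1 zero_le_one x
  have hr : UniformContinuous r :=
    uniformContinuous_const.add
      ((uniformContinuous_subtype_val.comp
        (LipschitzWith.projIcc zero_le_one).uniformContinuous).const_mul' (b - a))
  have hr_bot : r =ᶠ[atBot] fun _ => a := by
    filter_upwards [eventually_le_atBot 0] with x hx
    simp [r, projIcc_of_le_left _ hx]
  have hr_top : r =ᶠ[atTop] fun _ => b := by
    filter_upwards [eventually_ge_atTop 1] with x hx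
    simp [r, projIcc_of_right_le _ hx]
  have hfr : Tendsto (fun x => f x - r x) (cocompact ℝ) (𝓝 0) := by
    rw [cocompact_eq_atBot_atTop, tendsto_sup]
    exact ⟨by simpa using ha.sub (tendsto_const_nhds.congr' hr_bot.symm),
      by simpa using hb.sub (tendsto_const_nhds.congr' hr_top.symm)⟩
  simpa using ((hf.sub hr.continuous).uniformContinuous_of_tendsto_cocompact hfr).add hr

namespace CcTestOnE

variable {h : ℝ → ℝ}

theorem uniformContinuous (hh : CcTestOnE h) : UniformContinuous h := by
  obtain ⟨hcont, -, ⟨_, htop⟩, ⟨_, hbot⟩⟩ := hh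
  exact Real.uniformContinuous_of_tendsto_atBot_atTop hcont hbot htop

theorem isBounded_range (hh : CcTestOnE h) : Bornology.IsBounded (range h) := by
  obtain ⟨hcont, -, ⟨_, htop⟩, ⟨_, hbot⟩⟩ := hh
  exact hcont.isBounded_range_iff_isBigO_atTop_atBot.2 ⟨htop.isBigO_one ℝ, hbot.isBigO_one ℝ⟩

theorem integrable_comp {Ω : Type*} [MeasurableSpace Ω] {μ : Measure Ω} [IsFiniteMeasure μ]
    (hh : CcTestOnE h) {Y : Ω → ℝ} (hY : AEMeasurable Y μ) :
    Integrable (fun ω => h (Y ω)) μ := by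
  obtain ⟨C, hC⟩ := hh.isBounded_range.exists_norm_le
  exact .of_bound (hh.1.measurable.comp_aemeasurable hY).aestronglyMeasurable C
    (ae_of_all _ fun ω => hC _ (mem_range_self _))

end CcTestOnE

theorem exists_ccTestOnE_nonneg_eq_one {ε : ℝ} (hε : 0 < ε) :
    ∃ g : ℝ → ℝ, CcTestOnE g ∧ (∀ x, 0 ≤ g x) ∧ ∀ x, ε ≤ |x| → g x = 1 := by
  set g : ℝ → ℝ := fun x => projIcc (0 : ℝ) 1 zero_le_one (2 * |x| / ε - 1)
  have hg_one : ∀ x, ε ≤ |x| → g x = 1 := fun x hx => by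
    have : 1 ≤ 2 * |x| / ε - 1 := by rw [le_sub_iff_add_le, le_div_iff₀ hε]; linarith
    simp [g, projIcc_of_right_le _ this]
  have hg_zero : ∀ x, |x| ≤ ε / 2 → g x = 0 := fun x hx => by
    have : 2 * |x| / ε - 1 ≤ 0 := by rw [sub_nonpos, div_le_one hε]; linarith
    simp [g, projIcc_of_le_left _ this]
  have hg_lim : ∀ l : Filter ℝ, Tendsto (fun x => |x|) l atTop → Tendsto g l (𝓝 1) :=
    fun l hl => tendsto_const_nhds.congr'
      ((hl.eventually_ge_atTop ε).mono fun x hx => (hg_one x hx).symm)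
  refine ⟨g, ⟨?_, ⟨ε / 2, half_pos hε, hg_zero⟩, ⟨1, hg_lim _ tendsto_abs_atTop_atTop⟩,
    ⟨1, hg_lim _ tendsto_abs_atBot_atTop⟩⟩, fun x => (projIcc 0 1 zero_le_one _).2.1, hg_one⟩
  exact continuous_subtype_val.comp <| continuous_projIcc.comp <|
    ((continuous_const.mul continuous_abs).div_const ε).sub continuous_const

theorem abs_comp_sub_sub_le_mul_cutoff {h g : ℝ → ℝ} {δ c ε : ℝ}
    (hh : ∀ x, |x| ≤ δ → h x = 0) (hg₀ : ∀ x, 0 ≤ g x) (hg₁ : ∀ x, δ / 2 ≤ |x| → g x = 1)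
    (hc : |c| ≤ δ / 2) (hmod : ∀ y, |h (y - c) - h y| ≤ ε) (y : ℝ) :
    |h (y - c) - h y| ≤ ε * g y := by
  rcases lt_or_ge |y| (δ / 2) with hy | hy
  · have hyc : |y - c| ≤ δ := by linarith [abs_sub y c]
    rw [hh y (by linarith [abs_nonneg c]), hh _ hyc, sub_zero, abs_zero]
    exact mul_nonneg ((abs_nonneg _).trans (hmod 0)) (hg₀ y)
  · rw [hg₁ y hy, mul_one]
    exact hmod y

section

variable {Ω : Type*} [MeasurableSpace Ω] {μ : Measure Ω} [IsFiniteMeasure μ]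

theorem abs_integral_comp_sub_sub_le {Y : Ω → ℝ} (hY : AEMeasurable Y μ) {h g : ℝ → ℝ}
    (hh : CcTestOnE h) (hg : CcTestOnE g) {c ε : ℝ} (hpt : ∀ y, |h (y - c) - h y| ≤ ε * g y) :
    |∫ ω, h (Y ω - c) ∂μ - ∫ ω, h (Y ω) ∂μ| ≤ ε * ∫ ω, g (Y ω) ∂μ := by
  rw [← integral_sub (hh.integrable_comp (hY.sub_const c)) (hh.integrable_comp hY),
    ← integral_const_mul]
  exact (abs_integral_le_integral_abs).trans <| integral_mono
    ((hh.integrable_comp (hY.sub_const c)).sub (hh.integrable_comp hY)).abs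
    ((hg.integrable_comp hY).const_mul ε) fun ω => hpt (Y ω)

theorem tendsto_mul_integral_comp_sub_sub {Y : ℕ → Ω → ℝ} (hY : ∀ n, AEMeasurable (Y n) μ)
    {a : ℕ → ℝ} (ha : ∀ n, 0 ≤ a n)
    (hbdd : ∀ g, CcTestOnE g → IsBoundedUnder (· ≤ ·) atTop fun n => a n * ∫ ω, g (Y n ω) ∂μ)
    {h : ℝ → ℝ} (hh : CcTestOnE h) {c : ℕ → ℝ} (hc : Tendsto c atTop (𝓝 0)) :
    Tendsto (fun n => a n * ∫ ω, h (Y n ω - c n) ∂μ - a n * ∫ ω, h (Y n ω) ∂μ) atTop (𝓝 0) := by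
  obtain ⟨δ, hδ, hzero⟩ := hh.2.1
  obtain ⟨g, hg, hg₀, hg₁⟩ := exists_ccTestOnE_nonneg_eq_one (half_pos hδ)
  obtain ⟨B, hB⟩ := hbdd g hg
  rw [Metric.tendsto_nhds]
  intro ε hε
  set ε' := ε / (|B| + 1)
  have hε' : 0 < ε' := by positivity
  obtain ⟨η, hη, hmod⟩ := Metric.uniformContinuous_iff.1 hh.uniformContinuous ε' hε'
  have hc_small : ∀ᶠ n in atTop, |c n| < min η (δ / 2) := by
    simpa using Metric.tendsto_nhds.1 hc _ (lt_min hη (half_pos hδ))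
  filter_upwards [eventually_map.1 hB, hc_small] with n hBn hcn
  have hpt : ∀ y, |h (y - c n) - h y| ≤ ε' * g y :=
    abs_comp_sub_sub_le_mul_cutoff hzero hg₀ hg₁ (hcn.le.trans (min_le_right _ _)) fun y =>
      (hmod (by simpa [Real.dist_eq] using hcn.trans_le (min_le_left _ _))).le
  rw [Real.dist_eq, sub_zero, ← mul_sub, abs_mul, abs_of_nonneg (ha n)]
  calc a n * |∫ ω, h (Y n ω - c n) ∂μ - ∫ ω, h (Y n ω) ∂μ|
      ≤ a n * (ε' * ∫ ω, g (Y n ω) ∂μ) :=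
        mul_le_mul_of_nonneg_left (abs_integral_comp_sub_sub_le (hY n) hh hg hpt) (ha n)
    _ = ε' * (a n * ∫ ω, g (Y n ω) ∂μ) := by ring
    _ ≤ ε' * |B| := mul_le_mul_of_nonneg_left (hBn.trans (le_abs_self B)) hε'.le
    _ < ε := by
        rw [div_mul_eq_mul_div, div_lt_iff₀ (by positivity)]
        linarith

end

theorem vague_convergence_stable_under_centering_general
    {Ω : Type*} [MeasurableSpace Ω] (P : Measure Ω) [IsProbabilityMeasure P]
    (X : Ω → ℝ) (hX : Measurable X)
    (b : ℕ → ℝ)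
    (ρ : Measure ℝ)
    (hvague : ∀ h : ℝ → ℝ, CcTestOnE h →
      Tendsto (fun n : ℕ => (n : ℝ) * ∫ ω, h (X ω / b n) ∂P) atTop (𝓝 (∫ x, h x ∂ρ)))
    (c : ℕ → ℝ) (hc : Tendsto c atTop (𝓝 0)) :
    ∀ h : ℝ → ℝ, CcTestOnE h →
      Tendsto (fun n : ℕ => (n : ℝ) * ∫ ω, h (X ω / b n - c n) ∂P) atTop
        (𝓝 (∫ x, h x ∂ρ)) := by
  intro h hh
  have hcentering := tendsto_mul_integral_comp_sub_sub (Y := fun n ω => X ω / b n)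
    (fun n => hX.aemeasurable.div_const (b n)) (fun n => n.cast_nonneg)
    (fun g hg => (hvague g hg).isBoundedUnder_le) hh hc
  simpa using hcentering.add (hvague h hh)

theorem vague_convergence_stable_under_centering
    {Ω : Type*} [MeasurableSpace Ω] (P : Measure Ω) [IsProbabilityMeasure P]
    (X : Ω → ℝ) (hX : Measurable X)
    (b : ℕ → ℝ) (hb : ∀ n, 0 < b n) (hbtop : Tendsto b atTop atTop)
    (ρ : Measure ℝ) (α p q : ℝ) (hα : 0 < α) (hα2 : α < 2) (hpq : p + q = 1)
    (hρp : ∀ x : ℝ, 0 < x → ρ (Ioi x) = ENNReal.ofReal (p * x ^ (-α)))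
    (hρq : ∀ x : ℝ, 0 < x → ρ (Iio (-x)) = ENNReal.ofReal (q * x ^ (-α)))
    (hvague : ∀ h : ℝ → ℝ, CcTestOnE h →
      Tendsto (fun n : ℕ => (n : ℝ) * ∫ ω, h (X ω / b n) ∂P) atTop (𝓝 (∫ x, h x ∂ρ)))
    (c : ℕ → ℝ) (hc : Tendsto c atTop (𝓝 0)) :
    ∀ h : ℝ → ℝ, CcTestOnE h →
      Tendsto (fun n : ℕ => (n : ℝ) * ∫ ω, h (X ω / b n - c n) ∂P) atTop
        (𝓝 (∫ x, h x ∂ρ)) :=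
  vague_convergence_stable_under_centering_general P X hX b ρ hvague c hc
end
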